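/- Let A* be a graded ring that is the inverse limit of graded rings A*_i, and let M*, N* be graded A*-modules that are inverse limits of A*_i-modules M*_i, N*_i. Assume all gradings are nonnegative and that in each degree n the limits stabilize (A^n = A^n_i, M^n = M^n_i, N^n = N^n_i for all sufficiently large i). Then for each fixed internal degree q and all sufficiently large i, Tor_p^{q,A*}(M*,N*) = Tor_p^{q,A*_i}(M*_i,N*_i) for all p. -/

import Mathlib

/-!
STATEMENT 0: Let `A*` be a graded ring that is the inverse limit of graded rings `A*_i`,
and let `M*`, `N*` be graded `A*`-modules that are inverse limits of `A*_i`-modules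
`M*_i`, `N*_i`.  Assume all gradings are nonnegative and that in each degree `n` the
limits stabilize (`A^n = A^n_i`, `M^n = M^n_i`, `N^n = N^n_i` for all sufficiently
large `i`).  Then for each fixed internal degree `q` and all sufficiently large `i`,
`Tor_p^{q,A*}(M*,N*) = Tor_p^{q,A*_i}(M*_i,N*_i)` for all `p`.

Graded Tor is realized as the homology of the bar complex with its internal grading.
-/

open TensorProduct

namespace BarCore

variable (R : Type) [CommRing R] [Algebra ℚ R]
variable (M : Type) [AddCommGroup M] [Module ℚ M] [Module R M] [IsScalarTower ℚ R M]
variable (N : Type) [AddCommGroup N] [Module ℚ N] [Module R N] [IsScalarTower ℚ R N]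

/-- Iterated tensor power `R^{⊗ p} ⊗ N` (over ℚ), the building block of the bar complex. -/
noncomputable def Tpow : ℕ → ModuleCat.{0} ℚ
  | 0 => ModuleCat.of ℚ N
  | (p+1) => ModuleCat.of ℚ (R ⊗[ℚ] (Tpow p))

/-- The action `R ⊗ N → N` as a ℚ-linear map. -/
noncomputable def act₀ : R ⊗[ℚ] N →ₗ[ℚ] N :=
  TensorProduct.lift
    (LinearMap.mk₂ ℚ (fun (a : R) (n : N) => a • n)
      (fun a b n => add_smul a b n)
      (fun q a n => smul_assoc q a n)
      (fun a n n' => smul_add a n n')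
      (fun q a n => (smul_comm q a n).symm))

/-- One step of the inner bar differential. -/
noncomputable def deltaSucc (T : Type) [AddCommGroup T] [Module ℚ T]
    (prev : R ⊗[ℚ] T →ₗ[ℚ] T) : R ⊗[ℚ] (R ⊗[ℚ] T) →ₗ[ℚ] R ⊗[ℚ] T :=
  TensorProduct.lift
    (@HSub.hSub _ _ _ (@instHSub _ (@LinearMap.instSub ℚ ℚ R (R ⊗[ℚ] T →ₗ[ℚ] R ⊗[ℚ] T) _ _ _ _ _ _ _))
      ((LinearMap.rTensorHom T).comp (LinearMap.mul ℚ R))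
      ((LinearMap.lcomp ℚ (R ⊗[ℚ] T) prev).comp (TensorProduct.mk ℚ R T)))

/-- The inner bar differential `R^{⊗(p+1)} ⊗ N → R^{⊗p} ⊗ N`,
`a₀ ⊗ ⋯ ⊗ a_p ⊗ n ↦ Σᵢ (-1)^i a₀ ⊗ ⋯ ⊗ aᵢaᵢ₊₁ ⊗ ⋯ ⊗ n` (the last term uses the action on `N`). -/
noncomputable def delta : ∀ p : ℕ, (Tpow R N (p+1) : Type) →ₗ[ℚ] (Tpow R N p : Type)
  | 0 => (act₀ R N : R ⊗[ℚ] N →ₗ[ℚ] N)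
  | (p+1) =>
      (deltaSucc R (Tpow R N p : Type) (delta p) :
        R ⊗[ℚ] (R ⊗[ℚ] (Tpow R N p : Type)) →ₗ[ℚ] R ⊗[ℚ] (Tpow R N p : Type))

/-- The bar complex `M ⊗ R^{⊗p} ⊗ N`. -/
abbrev Bar (p : ℕ) : Type := M ⊗[ℚ] (Tpow R N p : Type)

/-- Right action of `R` on `M` as a ℚ-linear map `M ⊗ R → M`. -/
noncomputable def act : M ⊗[ℚ] R →ₗ[ℚ] M :=
  TensorProduct.lift
    (LinearMap.mk₂ ℚ (fun (m : M) (a : R) => a • m)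
      (fun m m' a => smul_add a m m')
      (fun q m a => (smul_comm a q m))
      (fun m a b => add_smul a b m)
      (fun q m a => smul_assoc q a m))

/-- The bar differential `Bar (p+1) → Bar p`. -/
noncomputable def d (p : ℕ) : Bar R M N (p+1) →ₗ[ℚ] Bar R M N p :=
  ((LinearMap.rTensor (Tpow R N p : Type) (act R M)).comp
      (TensorProduct.assoc ℚ M R (Tpow R N p : Type)).symm.toLinearMap :
      M ⊗[ℚ] (R ⊗[ℚ] (Tpow R N p : Type)) →ₗ[ℚ] Bar R M N p)
    - (LinearMap.lTensor M (delta R N p) :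
      M ⊗[ℚ] (R ⊗[ℚ] (Tpow R N p : Type)) →ₗ[ℚ] Bar R M N p)

variable (𝒜 : ℕ → Submodule ℚ R) (ℳ : ℕ → Submodule ℚ M) (𝒩 : ℕ → Submodule ℚ N)

/-- Internal (degree) grading on `R^{⊗p} ⊗ N`. -/
noncomputable def tgrade : ∀ p : ℕ, ℕ → Submodule ℚ (Tpow R N p : Type)
  | 0 => 𝒩
  | (p+1) => fun q => ⨆ (ij : ℕ × ℕ) (_ : ij.1 + ij.2 = q),
      LinearMap.range
        (TensorProduct.map (𝒜 ij.1).subtype ((tgrade p ij.2)).subtype :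
          _ →ₗ[ℚ] R ⊗[ℚ] (Tpow R N p : Type))

/-- Internal (degree) grading on the bar complex `M ⊗ R^{⊗p} ⊗ N`. -/
noncomputable def bgrade (p q : ℕ) : Submodule ℚ (Bar R M N p) :=
  ⨆ (ij : ℕ × ℕ) (_ : ij.1 + ij.2 = q),
    LinearMap.range (TensorProduct.map (ℳ ij.1).subtype (tgrade R N 𝒜 𝒩 p ij.2).subtype)

/-- Cycles of the bar complex. -/
noncomputable def cycles : ∀ p : ℕ, Submodule ℚ (Bar R M N p)
  | 0 => ⊤
  | (p+1) => LinearMap.ker (d R M N p)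

/-- Boundaries of the bar complex. -/
noncomputable def bnd (p : ℕ) : Submodule ℚ (Bar R M N p) :=
  LinearMap.range (d R M N p)

/-- `Tor_p^{q,R}(M,N)`: the internal-degree-`q` piece of the `p`-th homology of the
bar complex `M ⊗ R^{⊗•} ⊗ N` (which computes the torsion product of graded modules
over the graded connected ℚ-algebra `R`). -/
noncomputable def gradedTor (p q : ℕ) : Type :=
  ↥(cycles R M N p ⊓ bgrade R M N 𝒜 ℳ 𝒩 p q) ⧸
    Submodule.comap (cycles R M N p ⊓ bgrade R M N 𝒜 ℳ 𝒩 p q).subtype (bnd R M N p)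

noncomputable instance (p q : ℕ) : AddCommGroup (gradedTor R M N 𝒜 ℳ 𝒩 p q) := by
  unfold gradedTor; infer_instance

noncomputable instance (p q : ℕ) : Module ℚ (gradedTor R M N 𝒜 ℳ 𝒩 p q) := by
  unfold gradedTor; infer_instance

end BarCore

attribute [reducible] BarCore.Tpow

namespace BarCore

open TensorProduct

variable (R : Type) [CommRing R] [Algebra ℚ R]
variable (M : Type) [AddCommGroup M] [Module ℚ M] [Module R M] [IsScalarTower ℚ R M]
variable (N : Type) [AddCommGroup N] [Module ℚ N] [Module R N] [IsScalarTower ℚ R N]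

lemma act₀_tmul (a : R) (n : N) : act₀ R N (a ⊗ₜ[ℚ] n) = a • n := rfl

lemma act_tmul (m : M) (a : R) : act R M (m ⊗ₜ[ℚ] a) = a • m := rfl

lemma deltaSucc_tmul (T : Type) [AddCommGroup T] [Module ℚ T]
    (prev : R ⊗[ℚ] T →ₗ[ℚ] T) (a : R) (y : R ⊗[ℚ] T) :
    deltaSucc R T prev (a ⊗ₜ[ℚ] y) =
      LinearMap.rTensor T (LinearMap.mul ℚ R a) y - a ⊗ₜ[ℚ] prev y := by
  simp [deltaSucc]; rfl

lemma delta_zero_tmul (a : R) (n : N) : delta R N 0 (a ⊗ₜ[ℚ] n) = a • n := rfl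

lemma delta_succ_apply (p : ℕ) (x : (Tpow R N (p+2) : Type)) :
    delta R N (p+1) x =
      deltaSucc R (Tpow R N p : Type) (delta R N p) x := rfl

lemma d_tmul (p : ℕ) (m : M) (y : (Tpow R N (p+1) : Type)) :
    d R M N p (m ⊗ₜ[ℚ] y) =
      (LinearMap.rTensor (Tpow R N p : Type) (act R M))
        ((TensorProduct.assoc ℚ M R (Tpow R N p : Type)).symm (m ⊗ₜ[ℚ] y))
      - m ⊗ₜ[ℚ] delta R N p y := rfl

end BarCore
namespace BarCore

open TensorProduct

variable (R : Type) [CommRing R] [Algebra ℚ R]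
variable (M : Type) [AddCommGroup M] [Module ℚ M] [Module R M] [IsScalarTower ℚ R M]
variable (N : Type) [AddCommGroup N] [Module ℚ N] [Module R N] [IsScalarTower ℚ R N]
variable (𝒜 : ℕ → Submodule ℚ R) (ℳ : ℕ → Submodule ℚ M) (𝒩 : ℕ → Submodule ℚ N)

lemma tmul_mem_tgrade {p n m : ℕ} {a : R} {t : (Tpow R N p : Type)}
    (ha : a ∈ 𝒜 n) (ht : t ∈ tgrade R N 𝒜 𝒩 p m) :
    (a ⊗ₜ[ℚ] t : R ⊗[ℚ] (Tpow R N p : Type)) ∈ tgrade R N 𝒜 𝒩 (p+1) (n+m) := by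
  show _ ∈ ⨆ (ij : ℕ × ℕ) (_ : ij.1 + ij.2 = n + m), LinearMap.range _
  apply Submodule.mem_iSup_of_mem (⟨n, m⟩ : ℕ × ℕ)
  apply Submodule.mem_iSup_of_mem rfl
  exact ⟨(⟨a, ha⟩ : 𝒜 n) ⊗ₜ[ℚ] (⟨t, ht⟩ : tgrade R N 𝒜 𝒩 p m), rfl⟩

lemma tgrade_succ_le {p j : ℕ} {K : Submodule ℚ (R ⊗[ℚ] (Tpow R N p : Type))}
    (h : ∀ n m, n + m = j → ∀ a ∈ 𝒜 n, ∀ t ∈ tgrade R N 𝒜 𝒩 p m,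
      a ⊗ₜ[ℚ] t ∈ K) :
    tgrade R N 𝒜 𝒩 (p+1) j ≤ K := by
  show (⨆ (ij : ℕ × ℕ) (_ : ij.1 + ij.2 = j), LinearMap.range _) ≤ K
  refine iSup_le fun ij => iSup_le fun hij => ?_
  rw [TensorProduct.range_map_eq_span_tmul, Submodule.span_le]
  rintro x ⟨⟨a, ha⟩, ⟨t, ht⟩, rfl⟩
  exact h ij.1 ij.2 hij a ha t ht

lemma tmul_mem_bgrade {p n m : ℕ} {x : M} {t : (Tpow R N p : Type)}
    (hx : x ∈ ℳ n) (ht : t ∈ tgrade R N 𝒜 𝒩 p m) :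
    (x ⊗ₜ[ℚ] t : Bar R M N p) ∈ bgrade R M N 𝒜 ℳ 𝒩 p (n+m) := by
  apply Submodule.mem_iSup_of_mem (⟨n, m⟩ : ℕ × ℕ)
  apply Submodule.mem_iSup_of_mem rfl
  exact ⟨(⟨x, hx⟩ : ℳ n) ⊗ₜ[ℚ] (⟨t, ht⟩ : tgrade R N 𝒜 𝒩 p m), rfl⟩

lemma bgrade_le {p q : ℕ} {K : Submodule ℚ (Bar R M N p)}
    (h : ∀ n m, n + m = q → ∀ x ∈ ℳ n, ∀ t ∈ tgrade R N 𝒜 𝒩 p m,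
      x ⊗ₜ[ℚ] t ∈ K) :
    bgrade R M N 𝒜 ℳ 𝒩 p q ≤ K := by
  refine iSup_le fun ij => iSup_le fun hij => ?_
  rw [TensorProduct.range_map_eq_span_tmul, Submodule.span_le]
  rintro x ⟨⟨a, ha⟩, ⟨t, ht⟩, rfl⟩
  exact h ij.1 ij.2 hij a ha t ht

lemma iSup_tgrade_eq_top [DirectSum.Decomposition 𝒜] [DirectSum.Decomposition 𝒩] :
    ∀ p : ℕ, (⨆ j, tgrade R N 𝒜 𝒩 p j) = ⊤ := by
  intro p
  induction p with
  | zero => exact (DirectSum.Decomposition.isInternal 𝒩).submodule_iSup_eq_top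
  | succ p ih =>
    rw [eq_top_iff]
    rintro x -
    have key : ∀ (a : R) (t : (Tpow R N p : Type)),
        (a ⊗ₜ[ℚ] t : R ⊗[ℚ] (Tpow R N p : Type)) ∈ ⨆ j, tgrade R N 𝒜 𝒩 (p+1) j := by
      intro a t
      have ha : a ∈ ⨆ n, 𝒜 n := by
        rw [(DirectSum.Decomposition.isInternal 𝒜).submodule_iSup_eq_top]; trivial
      have ht : t ∈ ⨆ m, tgrade R N 𝒜 𝒩 p m := by rw [ih]; trivial
      refine Submodule.iSup_induction _ (motive := fun a => (a ⊗ₜ[ℚ] t : R ⊗[ℚ] (Tpow R N p : Type)) ∈ ⨆ j, tgrade R N 𝒜 𝒩 (p+1) j) ha ?_ ?_ ?_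
      · intro n a ha
        refine Submodule.iSup_induction _ (motive := fun t => (a ⊗ₜ[ℚ] t : R ⊗[ℚ] (Tpow R N p : Type)) ∈ ⨆ j, tgrade R N 𝒜 𝒩 (p+1) j) ht ?_ ?_ ?_
        · intro m t htm
          exact Submodule.mem_iSup_of_mem (n+m) (tmul_mem_tgrade R N 𝒜 𝒩 ha htm)
        · simp
        · intro y z hy hz
          rw [TensorProduct.tmul_add]; exact Submodule.add_mem _ hy hz
      · simp
      · intro y z hy hz
        rw [TensorProduct.add_tmul]; exact Submodule.add_mem _ hy hz
    refine TensorProduct.induction_on x ?_ ?_ ?_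
    · exact Submodule.zero_mem _
    · exact key
    · intro y z hy hz; exact Submodule.add_mem _ hy hz

lemma iSup_bgrade_eq_top [DirectSum.Decomposition 𝒜] [DirectSum.Decomposition ℳ]
    [DirectSum.Decomposition 𝒩] (p : ℕ) :
    (⨆ q, bgrade R M N 𝒜 ℳ 𝒩 p q) = ⊤ := by
  rw [eq_top_iff]
  rintro x -
  have key : ∀ (m : M) (t : (Tpow R N p : Type)),
      (m ⊗ₜ[ℚ] t : Bar R M N p) ∈ ⨆ q, bgrade R M N 𝒜 ℳ 𝒩 p q := by
    intro m t
    have hm : m ∈ ⨆ n, ℳ n := by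
      rw [(DirectSum.Decomposition.isInternal ℳ).submodule_iSup_eq_top]; trivial
    have ht : t ∈ ⨆ j, tgrade R N 𝒜 𝒩 p j := by
      rw [iSup_tgrade_eq_top R N 𝒜 𝒩]; trivial
    refine Submodule.iSup_induction _ (motive := fun m => (m ⊗ₜ[ℚ] t : Bar R M N p) ∈ ⨆ q, bgrade R M N 𝒜 ℳ 𝒩 p q) hm ?_ ?_ ?_
    · intro n m hmn
      refine Submodule.iSup_induction _ (motive := fun t => (m ⊗ₜ[ℚ] t : Bar R M N p) ∈ ⨆ q, bgrade R M N 𝒜 ℳ 𝒩 p q) ht ?_ ?_ ?_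
      · intro j t htj
        exact Submodule.mem_iSup_of_mem (n+j) (tmul_mem_bgrade R M N 𝒜 ℳ 𝒩 hmn htj)
      · simp
      · intro y z hy hz; rw [TensorProduct.tmul_add]; exact Submodule.add_mem _ hy hz
    · simp
    · intro y z hy hz; rw [TensorProduct.add_tmul]; exact Submodule.add_mem _ hy hz
  refine TensorProduct.induction_on x ?_ ?_ ?_
  · exact Submodule.zero_mem _
  · exact key
  · intro y z hy hz; exact Submodule.add_mem _ hy hz

end BarCore
namespace BarCore

set_option linter.unusedSectionVars false
set_option maxHeartbeats 1000000

open TensorProduct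

variable (R : Type) [CommRing R] [Algebra ℚ R]
variable (M : Type) [AddCommGroup M] [Module ℚ M] [Module R M] [IsScalarTower ℚ R M]
variable (N : Type) [AddCommGroup N] [Module ℚ N] [Module R N] [IsScalarTower ℚ R N]
variable (𝒜 : ℕ → Submodule ℚ R) (ℳ : ℕ → Submodule ℚ M) (𝒩 : ℕ → Submodule ℚ N)

lemma rTensor_mul_tgrade [SetLike.GradedMonoid 𝒜] {p n j : ℕ} {a : R} (ha : a ∈ 𝒜 n)
    {y : (Tpow R N (p+1) : Type)} (hy : y ∈ tgrade R N 𝒜 𝒩 (p+1) j) :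
    LinearMap.rTensor (Tpow R N p : Type) (LinearMap.mul ℚ R a) y
      ∈ tgrade R N 𝒜 𝒩 (p+1) (n+j) := by
  refine tgrade_succ_le R N 𝒜 𝒩
    (K := Submodule.comap (LinearMap.rTensor (Tpow R N p : Type) (LinearMap.mul ℚ R a))
      (tgrade R N 𝒜 𝒩 (p+1) (n+j))) ?_ hy
  intro n' m' hnm b hb t ht
  show ((a * b) ⊗ₜ[ℚ] t : R ⊗[ℚ] (Tpow R N p : Type)) ∈ tgrade R N 𝒜 𝒩 (p+1) (n+j)
  have := tmul_mem_tgrade R N 𝒜 𝒩 (SetLike.mul_mem_graded ha hb) ht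
  rwa [show n + n' + m' = n + j by omega] at this

lemma delta_tgrade [SetLike.GradedMonoid 𝒜] [SetLike.GradedSMul 𝒜 𝒩] :
    ∀ p j, ∀ x ∈ tgrade R N 𝒜 𝒩 (p+1) j, delta R N p x ∈ tgrade R N 𝒜 𝒩 p j := by
  intro p
  induction p with
  | zero =>
    intro j x hx
    refine tgrade_succ_le R N 𝒜 𝒩
      (K := Submodule.comap (delta R N 0) (tgrade R N 𝒜 𝒩 0 j)) ?_ hx
    intro n m hnm a ha t ht
    show act₀ R N (a ⊗ₜ[ℚ] t) ∈ 𝒩 j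
    rw [act₀_tmul]
    have := (inferInstance : SetLike.GradedSMul 𝒜 𝒩).smul_mem ha ht
    rwa [show n +ᵥ m = j from hnm] at this
  | succ p ih =>
    intro j x hx
    refine tgrade_succ_le R N 𝒜 𝒩
      (K := Submodule.comap (delta R N (p+1)) (tgrade R N 𝒜 𝒩 (p+1) j)) ?_ hx
    intro n m hnm a ha y hy
    show delta R N (p+1) (a ⊗ₜ[ℚ] y) ∈ tgrade R N 𝒜 𝒩 (p+1) j
    rw [delta_succ_apply, deltaSucc_tmul]
    refine Submodule.sub_mem _ ?_ ?_
    · have := rTensor_mul_tgrade R N 𝒜 𝒩 ha hy (p := p)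
      rwa [hnm] at this
    · have := tmul_mem_tgrade R N 𝒜 𝒩 ha (ih m y hy)
      rwa [hnm] at this

lemma d_bgrade [SetLike.GradedMonoid 𝒜] [SetLike.GradedSMul 𝒜 ℳ] [SetLike.GradedSMul 𝒜 𝒩]
    (p q : ℕ) : ∀ x ∈ bgrade R M N 𝒜 ℳ 𝒩 (p+1) q, d R M N p x ∈ bgrade R M N 𝒜 ℳ 𝒩 p q := by
  intro x hx
  refine bgrade_le R M N 𝒜 ℳ 𝒩
    (K := Submodule.comap (d R M N p) (bgrade R M N 𝒜 ℳ 𝒩 p q)) ?_ hx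
  intro n m hnm z hz y hy
  show d R M N p (z ⊗ₜ[ℚ] y) ∈ bgrade R M N 𝒜 ℳ 𝒩 p q
  rw [d_tmul]
  refine Submodule.sub_mem _ ?_ ?_
  · -- first term: induction over y ∈ tgrade (p+1) m
    refine tgrade_succ_le R N 𝒜 𝒩
      (K := Submodule.comap
        ((LinearMap.rTensor (Tpow R N p : Type) (act R M)) ∘ₗ
          ((TensorProduct.assoc ℚ M R (Tpow R N p : Type)).symm.toLinearMap) ∘ₗ
          (TensorProduct.mk ℚ M (R ⊗[ℚ] (Tpow R N p : Type)) z))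
        (bgrade R M N 𝒜 ℳ 𝒩 p q)) ?_ hy
    intro n' m' hnm' a ha t ht
    show LinearMap.rTensor _ (act R M)
        ((TensorProduct.assoc ℚ M R (Tpow R N p : Type)).symm (z ⊗ₜ[ℚ] (a ⊗ₜ[ℚ] t)))
        ∈ bgrade R M N 𝒜 ℳ 𝒩 p q
    rw [TensorProduct.assoc_symm_tmul]
    rw [LinearMap.rTensor_tmul, act_tmul]
    have hsm : a • z ∈ ℳ (n' + n) := (inferInstance : SetLike.GradedSMul 𝒜 ℳ).smul_mem ha hz
    have := tmul_mem_bgrade R M N 𝒜 ℳ 𝒩 hsm ht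
    rwa [show n' + n + m' = q by omega] at this
  · have := tmul_mem_bgrade R M N 𝒜 ℳ 𝒩 hz (delta_tgrade R N 𝒜 𝒩 p m y hy)
    rwa [hnm] at this

end BarCore
namespace BarCore

set_option linter.unusedSectionVars false
set_option maxHeartbeats 1000000

open TensorProduct

variable (R : Type) [CommRing R] [Algebra ℚ R]
variable (M : Type) [AddCommGroup M] [Module ℚ M] [Module R M] [IsScalarTower ℚ R M]
variable (N : Type) [AddCommGroup N] [Module ℚ N] [Module R N] [IsScalarTower ℚ R N]
variable (𝒜 : ℕ → Submodule ℚ R) (ℳ : ℕ → Submodule ℚ M) (𝒩 : ℕ → Submodule ℚ N)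

/-- Degree-`j` projection of a graded module, as an endomorphism. -/
noncomputable def projL {V : Type} [AddCommGroup V] [Module ℚ V] (𝒱 : ℕ → Submodule ℚ V)
    [DirectSum.Decomposition 𝒱] (j : ℕ) : V →ₗ[ℚ] V :=
  (𝒱 j).subtype ∘ₗ (DirectSum.component ℚ ℕ (fun j => 𝒱 j) j) ∘ₗ
    (DirectSum.decomposeLinearEquiv 𝒱).toLinearMap

lemma projL_apply {V : Type} [AddCommGroup V] [Module ℚ V] (𝒱 : ℕ → Submodule ℚ V)
    [DirectSum.Decomposition 𝒱] (j : ℕ) (x : V) :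
    projL 𝒱 j x = (DirectSum.decompose 𝒱 x j : V) := rfl

lemma projL_of_mem_same {V : Type} [AddCommGroup V] [Module ℚ V] {𝒱 : ℕ → Submodule ℚ V}
    [DirectSum.Decomposition 𝒱] {j : ℕ} {x : V} (hx : x ∈ 𝒱 j) : projL 𝒱 j x = x := by
  rw [projL_apply, DirectSum.decompose_of_mem_same 𝒱 hx]

lemma projL_of_mem_ne {V : Type} [AddCommGroup V] [Module ℚ V] {𝒱 : ℕ → Submodule ℚ V}
    [DirectSum.Decomposition 𝒱] {j k : ℕ} (hjk : k ≠ j) {x : V} (hx : x ∈ 𝒱 k) :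
    projL 𝒱 j x = 0 := by
  rw [projL_apply, DirectSum.decompose_of_mem_ne 𝒱 hx hjk]

lemma projL_mem {V : Type} [AddCommGroup V] [Module ℚ V] {𝒱 : ℕ → Submodule ℚ V}
    [DirectSum.Decomposition 𝒱] (j : ℕ) (x : V) : projL 𝒱 j x ∈ 𝒱 j := by
  rw [projL_apply]; exact (DirectSum.decompose 𝒱 x j).2

lemma mem_of_eq {V : Type} [AddCommGroup V] [Module ℚ V] {p : Submodule ℚ V} {a b : V}
    (h : a = b) (hb : b ∈ p) : a ∈ p := h ▸ hb

variable [DirectSum.Decomposition 𝒜] [DirectSum.Decomposition ℳ] [DirectSum.Decomposition 𝒩]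

/-- Degree-`j` projection of `R^{⊗p} ⊗ N`. -/
noncomputable def Tproj : ∀ p : ℕ, ℕ → ((Tpow R N p : Type) →ₗ[ℚ] (Tpow R N p : Type))
  | 0 => fun j => projL 𝒩 j
  | (p+1) => fun j =>
      ∑ n ∈ Finset.range (j+1),
        (TensorProduct.map (projL 𝒜 n) (Tproj p (j - n)) :
          R ⊗[ℚ] (Tpow R N p : Type) →ₗ[ℚ] R ⊗[ℚ] (Tpow R N p : Type))

lemma Tproj_zero_def (j : ℕ) : Tproj R N 𝒜 𝒩 0 j = projL 𝒩 j := rfl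

lemma Tproj_succ_def (p j : ℕ) :
    Tproj R N 𝒜 𝒩 (p+1) j =
      ∑ n ∈ Finset.range (j+1),
        (TensorProduct.map (projL 𝒜 n) (Tproj R N 𝒜 𝒩 p (j - n)) :
          R ⊗[ℚ] (Tpow R N p : Type) →ₗ[ℚ] R ⊗[ℚ] (Tpow R N p : Type)) := rfl

lemma Tproj_succ_apply (p j : ℕ) (y : R ⊗[ℚ] (Tpow R N p : Type)) :
    Tproj R N 𝒜 𝒩 (p+1) j y =
      ∑ n ∈ Finset.range (j+1),
        (TensorProduct.map (projL 𝒜 n) (Tproj R N 𝒜 𝒩 p (j - n))) y := by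
  exact (DFunLike.congr_fun (Tproj_succ_def R N 𝒜 𝒩 p j) y).trans (LinearMap.sum_apply _ _ _)

lemma Tproj_tmul (p j : ℕ) (a : R) (t : (Tpow R N p : Type)) :
    Tproj R N 𝒜 𝒩 (p+1) j (a ⊗ₜ[ℚ] t) =
      ∑ n ∈ Finset.range (j+1), (projL 𝒜 n a) ⊗ₜ[ℚ] (Tproj R N 𝒜 𝒩 p (j - n) t) := by
  exact (Tproj_succ_apply R N 𝒜 𝒩 p j _).trans
    (Finset.sum_congr rfl fun n _ => TensorProduct.map_tmul _ _ _ _)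

lemma Tproj_mem : ∀ p j x, Tproj R N 𝒜 𝒩 p j x ∈ tgrade R N 𝒜 𝒩 p j := by
  intro p
  induction p with
  | zero => intro j x; exact projL_mem (𝒱 := 𝒩) j x
  | succ p ih =>
    intro j x
    refine mem_of_eq (Tproj_succ_apply R N 𝒜 𝒩 p j x) ?_
    refine Submodule.sum_mem _ fun n hn => ?_
    have hr : LinearMap.range (TensorProduct.map (projL 𝒜 n) (Tproj R N 𝒜 𝒩 p (j - n)))
        ≤ tgrade R N 𝒜 𝒩 (p+1) j := by
      rw [TensorProduct.range_map_eq_span_tmul, Submodule.span_le]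
      rintro z ⟨a, t, rfl⟩
      have := tmul_mem_tgrade R N 𝒜 𝒩 (projL_mem n a) (ih (j - n) t)
      rwa [show n + (j - n) = j by simp at hn; omega] at this
    exact hr ⟨x, rfl⟩

lemma Tproj_of_mem : ∀ p k j, ∀ x ∈ tgrade R N 𝒜 𝒩 p k,
    Tproj R N 𝒜 𝒩 p j x = if k = j then x else 0 := by
  intro p
  induction p with
  | zero =>
    intro k j x hx
    by_cases h : k = j
    · subst h
      have hx' : x ∈ 𝒩 k := hx
      rw [if_pos rfl, Tproj_zero_def, projL_of_mem_same hx']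
    · have hx' : x ∈ 𝒩 k := hx
      rw [if_neg h, Tproj_zero_def, projL_of_mem_ne h hx']
  | succ p ih =>
    intro k j x hx
    by_cases h : k = j
    · subst h
      rw [if_pos rfl]
      have hk : tgrade R N 𝒜 𝒩 (p+1) k ≤
          LinearMap.ker (Tproj R N 𝒜 𝒩 (p+1) k - LinearMap.id) := by
        refine tgrade_succ_le R N 𝒜 𝒩 ?_
        intro n m hnm a ha t ht
        rw [LinearMap.mem_ker, LinearMap.sub_apply, sub_eq_zero]
        refine Eq.trans (Tproj_tmul R N 𝒜 𝒩 p k a t) ?_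
        rw [Finset.sum_eq_single_of_mem n (Finset.mem_range.mpr (by omega))]
        · rw [projL_of_mem_same ha, show k - n = m by omega, ih m m t ht, if_pos rfl]
          rfl
        · intro b _ hb
          rw [projL_of_mem_ne (fun hh => hb hh.symm) ha, TensorProduct.zero_tmul]
      have := hk hx
      rw [LinearMap.mem_ker, LinearMap.sub_apply, sub_eq_zero] at this
      exact this
    · rw [if_neg h]
      have hk : tgrade R N 𝒜 𝒩 (p+1) k ≤ LinearMap.ker (Tproj R N 𝒜 𝒩 (p+1) j) := by
        refine tgrade_succ_le R N 𝒜 𝒩 ?_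
        intro n m hnm a ha t ht
        rw [LinearMap.mem_ker]
        refine Eq.trans (Tproj_tmul R N 𝒜 𝒩 p j a t) ?_
        refine Finset.sum_eq_zero fun b hb => ?_
        by_cases hbn : b = n
        · subst hbn
          have hne : j - b ≠ m := by
            simp only [Finset.mem_range] at hb
            intro hc; apply h; omega
          rw [ih m (j - b) t ht, if_neg (fun hc => hne hc.symm), TensorProduct.tmul_zero]
        · rw [projL_of_mem_ne (fun hh => hbn hh.symm) ha, TensorProduct.zero_tmul]
      exact LinearMap.mem_ker.mp (hk hx)

end BarCore
namespace BarCore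

set_option linter.unusedSectionVars false
set_option maxHeartbeats 1000000

open TensorProduct

variable (R : Type) [CommRing R] [Algebra ℚ R]
variable (M : Type) [AddCommGroup M] [Module ℚ M] [Module R M] [IsScalarTower ℚ R M]
variable (N : Type) [AddCommGroup N] [Module ℚ N] [Module R N] [IsScalarTower ℚ R N]
variable (𝒜 : ℕ → Submodule ℚ R) (ℳ : ℕ → Submodule ℚ M) (𝒩 : ℕ → Submodule ℚ N)
variable [DirectSum.Decomposition 𝒜] [DirectSum.Decomposition ℳ] [DirectSum.Decomposition 𝒩]

/-- Degree-`q` projection of the bar complex. -/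
noncomputable def Bproj (p q : ℕ) : Bar R M N p →ₗ[ℚ] Bar R M N p :=
  ∑ n ∈ Finset.range (q+1),
    TensorProduct.map (projL ℳ n) (Tproj R N 𝒜 𝒩 p (q - n))

lemma Bproj_tmul (p q : ℕ) (m : M) (t : (Tpow R N p : Type)) :
    Bproj R M N 𝒜 ℳ 𝒩 p q (m ⊗ₜ[ℚ] t) =
      ∑ n ∈ Finset.range (q+1), (projL ℳ n m) ⊗ₜ[ℚ] (Tproj R N 𝒜 𝒩 p (q - n) t) := by
  refine (LinearMap.sum_apply _ _ _).trans ?_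
  exact Finset.sum_congr rfl fun n _ => TensorProduct.map_tmul _ _ _ _

lemma Bproj_mem (p q : ℕ) (x : Bar R M N p) :
    Bproj R M N 𝒜 ℳ 𝒩 p q x ∈ bgrade R M N 𝒜 ℳ 𝒩 p q := by
  refine mem_of_eq (LinearMap.sum_apply _ _ x) ?_
  refine Submodule.sum_mem _ fun n hn => ?_
  have hr : LinearMap.range (TensorProduct.map (projL ℳ n) (Tproj R N 𝒜 𝒩 p (q - n)))
      ≤ bgrade R M N 𝒜 ℳ 𝒩 p q := by
    rw [TensorProduct.range_map_eq_span_tmul, Submodule.span_le]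
    rintro z ⟨m, t, rfl⟩
    have := tmul_mem_bgrade R M N 𝒜 ℳ 𝒩 (projL_mem (𝒱 := ℳ) n m)
      (Tproj_mem R N 𝒜 𝒩 p (q - n) t)
    rwa [show n + (q - n) = q by simp at hn; omega] at this
  exact hr ⟨x, rfl⟩

lemma Bproj_of_mem (p k q : ℕ) : ∀ x ∈ bgrade R M N 𝒜 ℳ 𝒩 p k,
    Bproj R M N 𝒜 ℳ 𝒩 p q x = if k = q then x else 0 := by
  intro x hx
  by_cases h : k = q
  · subst h
    rw [if_pos rfl]
    have hk : bgrade R M N 𝒜 ℳ 𝒩 p k ≤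
        LinearMap.ker (Bproj R M N 𝒜 ℳ 𝒩 p k - LinearMap.id) := by
      refine bgrade_le R M N 𝒜 ℳ 𝒩 ?_
      intro n m hnm z hz t ht
      rw [LinearMap.mem_ker, LinearMap.sub_apply, sub_eq_zero]
      refine Eq.trans (Bproj_tmul R M N 𝒜 ℳ 𝒩 p k z t) ?_
      rw [Finset.sum_eq_single_of_mem n (Finset.mem_range.mpr (by omega))]
      · rw [projL_of_mem_same hz, show k - n = m by omega,
          Tproj_of_mem R N 𝒜 𝒩 p m m t ht, if_pos rfl]
        rfl
      · intro b _ hb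
        rw [projL_of_mem_ne (fun hh => hb hh.symm) hz, TensorProduct.zero_tmul]
    have := hk hx
    rw [LinearMap.mem_ker, LinearMap.sub_apply, sub_eq_zero] at this
    exact this
  · rw [if_neg h]
    have hk : bgrade R M N 𝒜 ℳ 𝒩 p k ≤ LinearMap.ker (Bproj R M N 𝒜 ℳ 𝒩 p q) := by
      refine bgrade_le R M N 𝒜 ℳ 𝒩 ?_
      intro n m hnm z hz t ht
      rw [LinearMap.mem_ker]
      refine Eq.trans (Bproj_tmul R M N 𝒜 ℳ 𝒩 p q z t) ?_
      refine Finset.sum_eq_zero fun b hb => ?_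
      by_cases hbn : b = n
      · subst hbn
        have hne : q - b ≠ m := by
          simp only [Finset.mem_range] at hb
          intro hc; apply h; omega
        rw [Tproj_of_mem R N 𝒜 𝒩 p m (q - b) t ht, if_neg (fun hc => hne hc.symm),
          TensorProduct.tmul_zero]
      · rw [projL_of_mem_ne (fun hh => hbn hh.symm) hz, TensorProduct.zero_tmul]
    exact LinearMap.mem_ker.mp (hk hx)

lemma d_Bproj_comm [SetLike.GradedMonoid 𝒜] [SetLike.GradedSMul 𝒜 ℳ]
    [SetLike.GradedSMul 𝒜 𝒩] (p q : ℕ) (x : Bar R M N (p+1)) :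
    d R M N p (Bproj R M N 𝒜 ℳ 𝒩 (p+1) q x) = Bproj R M N 𝒜 ℳ 𝒩 p q (d R M N p x) := by
  have hK : ∀ r, bgrade R M N 𝒜 ℳ 𝒩 (p+1) r ≤
      LinearMap.ker ((d R M N p) ∘ₗ (Bproj R M N 𝒜 ℳ 𝒩 (p+1) q)
        - (Bproj R M N 𝒜 ℳ 𝒩 p q) ∘ₗ (d R M N p)) := by
    intro r y hy
    rw [LinearMap.mem_ker, LinearMap.sub_apply, LinearMap.comp_apply, LinearMap.comp_apply,
      sub_eq_zero]
    rw [Bproj_of_mem R M N 𝒜 ℳ 𝒩 (p+1) r q y hy,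
      Bproj_of_mem R M N 𝒜 ℳ 𝒩 p r q _ (d_bgrade R M N 𝒜 ℳ 𝒩 p r y hy)]
    by_cases h : r = q
    · rw [if_pos h, if_pos h]
    · rw [if_neg h, if_neg h, map_zero]
  have htop : LinearMap.ker ((d R M N p) ∘ₗ (Bproj R M N 𝒜 ℳ 𝒩 (p+1) q)
      - (Bproj R M N 𝒜 ℳ 𝒩 p q) ∘ₗ (d R M N p)) = ⊤ := by
    rw [eq_top_iff, ← iSup_bgrade_eq_top R M N 𝒜 ℳ 𝒩 (p+1)]
    exact iSup_le hK
  have := htop ▸ Submodule.mem_top (x := x)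
  rw [LinearMap.mem_ker, LinearMap.sub_apply, LinearMap.comp_apply, LinearMap.comp_apply,
    sub_eq_zero] at this
  exact this

lemma bnd_graded [SetLike.GradedMonoid 𝒜] [SetLike.GradedSMul 𝒜 ℳ]
    [SetLike.GradedSMul 𝒜 𝒩] (p q : ℕ) (x : Bar R M N p)
    (hxb : x ∈ bnd R M N p) (hxg : x ∈ bgrade R M N 𝒜 ℳ 𝒩 p q) :
    ∃ y ∈ bgrade R M N 𝒜 ℳ 𝒩 (p+1) q, d R M N p y = x := by
  obtain ⟨y₀, hy₀⟩ := hxb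
  refine ⟨Bproj R M N 𝒜 ℳ 𝒩 (p+1) q y₀, Bproj_mem R M N 𝒜 ℳ 𝒩 (p+1) q y₀, ?_⟩
  rw [d_Bproj_comm, hy₀, Bproj_of_mem R M N 𝒜 ℳ 𝒩 p q q x hxg, if_pos rfl]

end BarCore
namespace BarCore

set_option linter.unusedSectionVars false
set_option maxHeartbeats 1000000

open TensorProduct

variable (R : Type) [CommRing R] [Algebra ℚ R]
variable (M : Type) [AddCommGroup M] [Module ℚ M] [Module R M] [IsScalarTower ℚ R M]
variable (N : Type) [AddCommGroup N] [Module ℚ N] [Module R N] [IsScalarTower ℚ R N]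
variable (S : Type) [CommRing S] [Algebra ℚ S]
variable (M' : Type) [AddCommGroup M'] [Module ℚ M'] [Module S M'] [IsScalarTower ℚ S M']
variable (N' : Type) [AddCommGroup N'] [Module ℚ N'] [Module S N'] [IsScalarTower ℚ S N']
variable (π : R →ₐ[ℚ] S) (f : M →ₗ[ℚ] M') (g : N →ₗ[ℚ] N')

/-- The comparison map `R^{⊗p} ⊗ N → S^{⊗p} ⊗ N'`. -/
noncomputable def tmap : ∀ p : ℕ, (Tpow R N p : Type) →ₗ[ℚ] (Tpow S N' p : Type)
  | 0 => g
  | (p+1) => (TensorProduct.map π.toLinearMap (tmap p) :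
      R ⊗[ℚ] (Tpow R N p : Type) →ₗ[ℚ] S ⊗[ℚ] (Tpow S N' p : Type))

lemma tmap_zero_apply (n : N) : tmap R N S N' π g 0 n = g n := rfl

lemma tmap_tmul (p : ℕ) (a : R) (t : (Tpow R N p : Type)) :
    tmap R N S N' π g (p+1) (a ⊗ₜ[ℚ] t) = (π a) ⊗ₜ[ℚ] (tmap R N S N' π g p t) :=
  TensorProduct.map_tmul _ _ _ _

/-- The comparison map on the bar complex. -/
noncomputable def bmap (p : ℕ) : Bar R M N p →ₗ[ℚ] Bar S M' N' p :=
  TensorProduct.map f (tmap R N S N' π g p)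

lemma bmap_tmul (p : ℕ) (m : M) (t : (Tpow R N p : Type)) :
    bmap R M N S M' N' π f g p (m ⊗ₜ[ℚ] t) = (f m) ⊗ₜ[ℚ] (tmap R N S N' π g p t) :=
  TensorProduct.map_tmul _ _ _ _

lemma tmap_rTensor_mul (p : ℕ) (a : R) (y : (Tpow R N (p+1) : Type)) :
    tmap R N S N' π g (p+1) (LinearMap.rTensor (Tpow R N p : Type) (LinearMap.mul ℚ R a) y)
      = LinearMap.rTensor (Tpow S N' p : Type) (LinearMap.mul ℚ S (π a))
          (tmap R N S N' π g (p+1) y) := by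
  refine TensorProduct.induction_on y (by simp) ?_ (fun u v hu hv => ?_)
  · intro b t
    show (π (a * b)) ⊗ₜ[ℚ] tmap R N S N' π g p t
        = (π a * π b) ⊗ₜ[ℚ] tmap R N S N' π g p t
    rw [map_mul]
  · simp only [map_add, hu, hv]

/-- The comparison map commutes with the inner bar differential. -/
lemma tmap_delta (hg : ∀ (a : R) (n : N), g (a • n) = (π a) • (g n)) :
    ∀ p (x : (Tpow R N (p+1) : Type)),
    delta S N' p (tmap R N S N' π g (p+1) x) = tmap R N S N' π g p (delta R N p x) := by
  intro p
  induction p with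
  | zero =>
    intro x
    refine TensorProduct.induction_on x (by simp) ?_ (fun y z hy hz => ?_)
    · intro a n
      show π a • g (show N from n) = g (a • (show N from n))
      rw [hg]
    · rw [map_add, map_add, map_add, map_add, hy, hz]
  | succ p ih =>
    intro x
    refine TensorProduct.induction_on x (by simp) ?_ (fun y z hy hz => ?_)
    · intro a y
      show (LinearMap.rTensor (Tpow S N' p : Type) (LinearMap.mul ℚ S (π a))
              (tmap R N S N' π g (p+1) y)
            - (π a) ⊗ₜ[ℚ] delta S N' p (tmap R N S N' π g (p+1) y)
            : S ⊗[ℚ] (Tpow S N' p : Type))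
          = tmap R N S N' π g (p+1) (delta R N (p+1) (a ⊗ₜ[ℚ] y))
      rw [← tmap_rTensor_mul, ih y]
      rw [show (π a) ⊗ₜ[ℚ] tmap R N S N' π g p (delta R N p y)
          = tmap R N S N' π g (p+1) (a ⊗ₜ[ℚ] delta R N p y) from rfl]
      exact (map_sub (tmap R N S N' π g (p+1))
        (LinearMap.rTensor (Tpow R N p : Type) (LinearMap.mul ℚ R a) y)
        (a ⊗ₜ[ℚ] delta R N p y)).symm
    · rw [map_add, map_add, map_add, map_add, hy, hz]

/-- The comparison map commutes with the bar differential. -/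
lemma bmap_d (hf : ∀ (a : R) (m : M), f (a • m) = (π a) • (f m))
    (hg : ∀ (a : R) (n : N), g (a • n) = (π a) • (g n)) (p : ℕ) (x : Bar R M N (p+1)) :
    d S M' N' p (bmap R M N S M' N' π f g (p+1) x)
      = bmap R M N S M' N' π f g p (d R M N p x) := by
  refine TensorProduct.induction_on x (by simp) ?_ (fun y z hy hz => ?_)
  · intro m y
    refine TensorProduct.induction_on y (by simp [d_tmul]) ?_ (fun y z hy hz => ?_)
    · intro a t
      have h2 : delta S N' p ((π a) ⊗ₜ[ℚ] tmap R N S N' π g p t)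
          = tmap R N S N' π g p (delta R N p (a ⊗ₜ[ℚ] t)) :=
        tmap_delta R N S N' π g hg p (a ⊗ₜ[ℚ] t)
      show ((π a • f m) ⊗ₜ[ℚ] tmap R N S N' π g p t
            - f m ⊗ₜ[ℚ] delta S N' p ((π a) ⊗ₜ[ℚ] tmap R N S N' π g p t)
            : M' ⊗[ℚ] (Tpow S N' p : Type))
          = bmap R M N S M' N' π f g p (d R M N p (m ⊗ₜ[ℚ] (a ⊗ₜ[ℚ] t)))
      rw [← hf, h2]
      rw [show f (a • m) ⊗ₜ[ℚ] tmap R N S N' π g p t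
          = bmap R M N S M' N' π f g p ((a • m) ⊗ₜ[ℚ] t) from rfl]
      rw [show f m ⊗ₜ[ℚ] tmap R N S N' π g p (delta R N p (a ⊗ₜ[ℚ] t))
          = bmap R M N S M' N' π f g p (m ⊗ₜ[ℚ] delta R N p (a ⊗ₜ[ℚ] t)) from rfl]
      exact (map_sub (bmap R M N S M' N' π f g p)
        ((a • m) ⊗ₜ[ℚ] t) (m ⊗ₜ[ℚ] delta R N p (a ⊗ₜ[ℚ] t))).symm
    · simp only [TensorProduct.tmul_add, map_add]
      rw [hy, hz]
  · rw [map_add, map_add, map_add, map_add, hy, hz]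

variable (𝒜 : ℕ → Submodule ℚ R) (ℳ : ℕ → Submodule ℚ M) (𝒩 : ℕ → Submodule ℚ N)
variable (𝒜' : ℕ → Submodule ℚ S) (ℳ' : ℕ → Submodule ℚ M') (𝒩' : ℕ → Submodule ℚ N')

lemma tmap_tgrade (hπgr : ∀ n, ∀ a ∈ 𝒜 n, π a ∈ 𝒜' n)
    (hggr : ∀ n, ∀ x ∈ 𝒩 n, g x ∈ 𝒩' n) : ∀ p j, ∀ x ∈ tgrade R N 𝒜 𝒩 p j,
    tmap R N S N' π g p x ∈ tgrade S N' 𝒜' 𝒩' p j := by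
  intro p
  induction p with
  | zero => intro j x hx; exact hggr j x hx
  | succ p ih =>
    intro j x hx
    refine tgrade_succ_le R N 𝒜 𝒩
      (K := Submodule.comap (tmap R N S N' π g (p+1)) (tgrade S N' 𝒜' 𝒩' (p+1) j)) ?_ hx
    intro n m hnm a ha t ht
    show tmap R N S N' π g (p+1) (a ⊗ₜ[ℚ] t) ∈ tgrade S N' 𝒜' 𝒩' (p+1) j
    refine mem_of_eq (tmap_tmul R N S N' π g p a t) ?_
    have := tmul_mem_tgrade S N' 𝒜' 𝒩' (hπgr n a ha) (ih m t ht)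
    rwa [hnm] at this

lemma bmap_bgrade (hπgr : ∀ n, ∀ a ∈ 𝒜 n, π a ∈ 𝒜' n)
    (hfgr : ∀ n, ∀ m ∈ ℳ n, f m ∈ ℳ' n)
    (hggr : ∀ n, ∀ x ∈ 𝒩 n, g x ∈ 𝒩' n) (p q : ℕ) : ∀ x ∈ bgrade R M N 𝒜 ℳ 𝒩 p q,
    bmap R M N S M' N' π f g p x ∈ bgrade S M' N' 𝒜' ℳ' 𝒩' p q := by
  intro x hx
  refine bgrade_le R M N 𝒜 ℳ 𝒩
    (K := Submodule.comap (bmap R M N S M' N' π f g p) (bgrade S M' N' 𝒜' ℳ' 𝒩' p q)) ?_ hx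
  intro n m hnm z hz t ht
  show bmap R M N S M' N' π f g p (z ⊗ₜ[ℚ] t) ∈ bgrade S M' N' 𝒜' ℳ' 𝒩' p q
  refine mem_of_eq (bmap_tmul R M N S M' N' π f g p z t) ?_
  have := tmul_mem_bgrade S M' N' 𝒜' ℳ' 𝒩' (hfgr n z hz)
    (tmap_tgrade R N S N' π g 𝒜 𝒩 𝒜' 𝒩' hπgr hggr p m t ht)
  rwa [hnm] at this

end BarCore
namespace BarCore

set_option linter.unusedSectionVars false
set_option maxHeartbeats 1000000

open TensorProduct

section RhoConstruction

variable {V V' : Type} [AddCommGroup V] [Module ℚ V] [AddCommGroup V'] [Module ℚ V']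
variable (φ : V →ₗ[ℚ] V') (𝒱 : ℕ → Submodule ℚ V) (𝒱' : ℕ → Submodule ℚ V')
variable [DirectSum.Decomposition 𝒱'] (q : ℕ)
variable (hbij : ∀ n, n ≤ q → Set.BijOn φ (𝒱 n : Set V) (𝒱' n : Set V'))

/-- The degreewise inverse equivalence in degrees `≤ q`. -/
noncomputable def degEquiv (n : ℕ) (hn : n ≤ q) : (𝒱 n) ≃ₗ[ℚ] (𝒱' n) :=
  LinearEquiv.ofBijective
    (φ.restrict (p := 𝒱 n) (q := 𝒱' n) (fun x hx => (hbij n hn).mapsTo hx))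
    ⟨fun x y hxy => Subtype.ext ((hbij n hn).injOn x.2 y.2 (congrArg Subtype.val hxy)),
     fun y => by
      obtain ⟨x, hx, hxy⟩ := (hbij n hn).surjOn y.2
      exact ⟨⟨x, hx⟩, Subtype.ext hxy⟩⟩

lemma degEquiv_apply (n : ℕ) (hn : n ≤ q) (x : V) (hx : x ∈ 𝒱 n) :
    ((degEquiv φ 𝒱 𝒱' q hbij n hn ⟨x, hx⟩ : 𝒱' n) : V') = φ x := rfl

/-- A linear one-sided inverse to `φ` in degrees `≤ q`. -/
noncomputable def rho : V' →ₗ[ℚ] V :=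
  ∑ n ∈ (Finset.range (q+1)).attach,
    (𝒱 n.1).subtype ∘ₗ
      ((degEquiv φ 𝒱 𝒱' q hbij n.1 (Nat.lt_succ_iff.mp (Finset.mem_range.mp n.2))).symm.toLinearMap) ∘ₗ
      ((DirectSum.component ℚ ℕ (fun j => 𝒱' j) n.1) ∘ₗ
        (DirectSum.decomposeLinearEquiv 𝒱').toLinearMap)

lemma rho_apply_of_mem {n : ℕ} (hn : n ≤ q) {x : V'} (hx : x ∈ 𝒱' n) :
    rho φ 𝒱 𝒱' q hbij x =
      ((degEquiv φ 𝒱 𝒱' q hbij n hn).symm ⟨x, hx⟩ : V) := by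
  rw [rho, LinearMap.sum_apply]
  refine Eq.trans (Finset.sum_eq_single_of_mem
    (⟨n, Finset.mem_range.mpr (Nat.lt_succ_of_le hn)⟩ : {x // x ∈ Finset.range (q+1)})
    (Finset.mem_attach _ _) ?_) ?_
  · rintro ⟨b, hb⟩ - hbn
    have hbn' : b ≠ n := fun h => hbn (Subtype.ext h)
    simp only [LinearMap.comp_apply]
    have hz : (DirectSum.component ℚ ℕ (fun j => 𝒱' j) b)
        ((DirectSum.decomposeLinearEquiv 𝒱').toLinearMap x) = 0 :=
      Subtype.ext (DirectSum.decompose_of_mem_ne 𝒱' hx (fun h => hbn' h.symm))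
    rw [hz, map_zero, map_zero]
  · simp only [LinearMap.comp_apply]
    have hc : (DirectSum.component ℚ ℕ (fun j => 𝒱' j) n)
        ((DirectSum.decomposeLinearEquiv 𝒱').toLinearMap x) = ⟨x, hx⟩ :=
      Subtype.ext (DirectSum.decompose_of_mem_same 𝒱' hx)
    rw [hc]
    rfl

lemma rho_mem {n : ℕ} (hn : n ≤ q) {x : V'} (hx : x ∈ 𝒱' n) :
    rho φ 𝒱 𝒱' q hbij x ∈ 𝒱 n := by
  rw [rho_apply_of_mem φ 𝒱 𝒱' q hbij hn hx]
  exact ((degEquiv φ 𝒱 𝒱' q hbij n hn).symm ⟨x, hx⟩).2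

lemma phi_rho {n : ℕ} (hn : n ≤ q) {x : V'} (hx : x ∈ 𝒱' n) :
    φ (rho φ 𝒱 𝒱' q hbij x) = x := by
  rw [rho_apply_of_mem φ 𝒱 𝒱' q hbij hn hx]
  have := (degEquiv φ 𝒱 𝒱' q hbij n hn).apply_symm_apply ⟨x, hx⟩
  calc φ (((degEquiv φ 𝒱 𝒱' q hbij n hn).symm ⟨x, hx⟩ : 𝒱 n) : V)
      = ((degEquiv φ 𝒱 𝒱' q hbij n hn
          ((degEquiv φ 𝒱 𝒱' q hbij n hn).symm ⟨x, hx⟩) : 𝒱' n) : V') := rfl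
    _ = x := by rw [this]

lemma rho_phi {n : ℕ} (hn : n ≤ q) {x : V} (hx : x ∈ 𝒱 n) :
    rho φ 𝒱 𝒱' q hbij (φ x) = x := by
  rw [rho_apply_of_mem φ 𝒱 𝒱' q hbij hn ((hbij n hn).mapsTo hx)]
  have : degEquiv φ 𝒱 𝒱' q hbij n hn ⟨x, hx⟩ = ⟨φ x, (hbij n hn).mapsTo hx⟩ :=
    Subtype.ext rfl
  rw [← this, LinearEquiv.symm_apply_apply]

end RhoConstruction

end BarCore
namespace BarCore

set_option linter.unusedSectionVars false
set_option maxHeartbeats 1000000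

open TensorProduct

variable (R : Type) [CommRing R] [Algebra ℚ R]
variable (M : Type) [AddCommGroup M] [Module ℚ M] [Module R M] [IsScalarTower ℚ R M]
variable (N : Type) [AddCommGroup N] [Module ℚ N] [Module R N] [IsScalarTower ℚ R N]
variable (S : Type) [CommRing S] [Algebra ℚ S]
variable (M' : Type) [AddCommGroup M'] [Module ℚ M'] [Module S M'] [IsScalarTower ℚ S M']
variable (N' : Type) [AddCommGroup N'] [Module ℚ N'] [Module S N'] [IsScalarTower ℚ S N']
variable (π : R →ₐ[ℚ] S) (f : M →ₗ[ℚ] M') (g : N →ₗ[ℚ] N')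

/-- Backwards comparison map on tensor powers, from generic linear maps. -/
noncomputable def tlin (u : S →ₗ[ℚ] R) (w : N' →ₗ[ℚ] N) :
    ∀ p : ℕ, (Tpow S N' p : Type) →ₗ[ℚ] (Tpow R N p : Type)
  | 0 => w
  | (p+1) => (TensorProduct.map u (tlin u w p) :
      S ⊗[ℚ] (Tpow S N' p : Type) →ₗ[ℚ] R ⊗[ℚ] (Tpow R N p : Type))

lemma tlin_tmul (u : S →ₗ[ℚ] R) (w : N' →ₗ[ℚ] N) (p : ℕ) (a : S) (t : (Tpow S N' p : Type)) :
    tlin R N S N' u w (p+1) (a ⊗ₜ[ℚ] t) = (u a) ⊗ₜ[ℚ] (tlin R N S N' u w p t) :=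
  TensorProduct.map_tmul _ _ _ _

/-- Backwards comparison map on the bar complex. -/
noncomputable def blin (u : S →ₗ[ℚ] R) (v : M' →ₗ[ℚ] M) (w : N' →ₗ[ℚ] N) (p : ℕ) :
    Bar S M' N' p →ₗ[ℚ] Bar R M N p :=
  TensorProduct.map v (tlin R N S N' u w p)

lemma blin_tmul (u : S →ₗ[ℚ] R) (v : M' →ₗ[ℚ] M) (w : N' →ₗ[ℚ] N) (p : ℕ)
    (m : M') (t : (Tpow S N' p : Type)) :
    blin R M N S M' N' u v w p (m ⊗ₜ[ℚ] t) = (v m) ⊗ₜ[ℚ] (tlin R N S N' u w p t) :=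
  TensorProduct.map_tmul _ _ _ _

variable (𝒜 : ℕ → Submodule ℚ R) (ℳ : ℕ → Submodule ℚ M) (𝒩 : ℕ → Submodule ℚ N)
variable (𝒜' : ℕ → Submodule ℚ S) (ℳ' : ℕ → Submodule ℚ M') (𝒩' : ℕ → Submodule ℚ N')
variable [DirectSum.Decomposition 𝒜'] [DirectSum.Decomposition ℳ'] [DirectSum.Decomposition 𝒩']
variable (q : ℕ)
variable (hbA : ∀ n, n ≤ q → Set.BijOn π (𝒜 n : Set R) (𝒜' n : Set S))
variable (hbM : ∀ n, n ≤ q → Set.BijOn f (ℳ n : Set M) (ℳ' n : Set M'))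
variable (hbN : ∀ n, n ≤ q → Set.BijOn g (𝒩 n : Set N) (𝒩' n : Set N'))

/-- Inverse of `π` in degrees `≤ q`. -/
noncomputable def rhoA : S →ₗ[ℚ] R := rho π.toLinearMap 𝒜 𝒜' q hbA
/-- Inverse of `f` in degrees `≤ q`. -/
noncomputable def rhoM : M' →ₗ[ℚ] M := rho f ℳ ℳ' q hbM
/-- Inverse of `g` in degrees `≤ q`. -/
noncomputable def rhoN : N' →ₗ[ℚ] N := rho g 𝒩 𝒩' q hbN

/-- `tlin ∘ tmap = id` on `tgrade p j` for `j ≤ q`. -/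
lemma tlin_tmap : ∀ p j, j ≤ q → ∀ x ∈ tgrade R N 𝒜 𝒩 p j,
    tlin R N S N' (rhoA R S π 𝒜 𝒜' q hbA) (rhoN N N' g 𝒩 𝒩' q hbN) p
      (tmap R N S N' π g p x) = x := by
  intro p
  induction p with
  | zero =>
    intro j hj x hx
    have hx' : x ∈ 𝒩 j := hx
    exact rho_phi g 𝒩 𝒩' q hbN hj hx'
  | succ p ih =>
    intro j hj x hx
    have hK : tgrade R N 𝒜 𝒩 (p+1) j ≤ LinearMap.ker
        ((tlin R N S N' (rhoA R S π 𝒜 𝒜' q hbA) (rhoN N N' g 𝒩 𝒩' q hbN) (p+1)) ∘ₗ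
          (tmap R N S N' π g (p+1)) - LinearMap.id) := by
      refine tgrade_succ_le R N 𝒜 𝒩 ?_
      intro n m hnm a ha t ht
      rw [LinearMap.mem_ker, LinearMap.sub_apply, LinearMap.comp_apply, sub_eq_zero]
      show tlin R N S N' (rhoA R S π 𝒜 𝒜' q hbA) (rhoN N N' g 𝒩 𝒩' q hbN) (p+1)
          (tmap R N S N' π g (p+1) (a ⊗ₜ[ℚ] t)) = a ⊗ₜ[ℚ] t
      rw [tmap_tmul, tlin_tmul]
      have h1 : rhoA R S π 𝒜 𝒜' q hbA (π a) = a :=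
        rho_phi π.toLinearMap 𝒜 𝒜' q hbA (show n ≤ q by omega) ha
      rw [h1, ih m (by omega) t ht]
    have := hK hx
    rw [LinearMap.mem_ker, LinearMap.sub_apply, LinearMap.comp_apply, sub_eq_zero] at this
    exact this

/-- `blin ∘ bmap = id` on `bgrade p q`. -/
lemma blin_bmap (p : ℕ) : ∀ x ∈ bgrade R M N 𝒜 ℳ 𝒩 p q,
    blin R M N S M' N' (rhoA R S π 𝒜 𝒜' q hbA) (rhoM M M' f ℳ ℳ' q hbM)
      (rhoN N N' g 𝒩 𝒩' q hbN) p (bmap R M N S M' N' π f g p x) = x := by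
  intro x hx
  have hK : bgrade R M N 𝒜 ℳ 𝒩 p q ≤ LinearMap.ker
      ((blin R M N S M' N' (rhoA R S π 𝒜 𝒜' q hbA) (rhoM M M' f ℳ ℳ' q hbM)
        (rhoN N N' g 𝒩 𝒩' q hbN) p) ∘ₗ (bmap R M N S M' N' π f g p) - LinearMap.id) := by
    refine bgrade_le R M N 𝒜 ℳ 𝒩 ?_
    intro n m hnm z hz t ht
    rw [LinearMap.mem_ker, LinearMap.sub_apply, LinearMap.comp_apply, sub_eq_zero]
    show blin R M N S M' N' _ _ _ p (bmap R M N S M' N' π f g p (z ⊗ₜ[ℚ] t)) = z ⊗ₜ[ℚ] t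
    rw [bmap_tmul, blin_tmul]
    have h1 : rhoM M M' f ℳ ℳ' q hbM (f z) = z :=
      rho_phi f ℳ ℳ' q hbM (show n ≤ q by omega) hz
    rw [h1, tlin_tmap R N S N' π g 𝒜 𝒩 𝒜' 𝒩' q hbA hbN p m (by omega) t ht]
  have := hK hx
  rw [LinearMap.mem_ker, LinearMap.sub_apply, LinearMap.comp_apply, sub_eq_zero] at this
  exact this

/-- `tlin` preserves the grading and `tmap ∘ tlin = id` on `tgrade' p j` for `j ≤ q`. -/
lemma tmap_tlin : ∀ p j, j ≤ q → ∀ x ∈ tgrade S N' 𝒜' 𝒩' p j,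
    tlin R N S N' (rhoA R S π 𝒜 𝒜' q hbA) (rhoN N N' g 𝒩 𝒩' q hbN) p x ∈ tgrade R N 𝒜 𝒩 p j
    ∧ tmap R N S N' π g p
        (tlin R N S N' (rhoA R S π 𝒜 𝒜' q hbA) (rhoN N N' g 𝒩 𝒩' q hbN) p x) = x := by
  intro p
  induction p with
  | zero =>
    intro j hj x hx
    have hx' : x ∈ 𝒩' j := hx
    exact ⟨rho_mem g 𝒩 𝒩' q hbN hj hx', phi_rho g 𝒩 𝒩' q hbN hj hx'⟩
  | succ p ih =>
    intro j hj x hx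
    have hK : tgrade S N' 𝒜' 𝒩' (p+1) j ≤
        (Submodule.comap
          (tlin R N S N' (rhoA R S π 𝒜 𝒜' q hbA) (rhoN N N' g 𝒩 𝒩' q hbN) (p+1))
          (tgrade R N 𝒜 𝒩 (p+1) j)) ⊓
        LinearMap.ker ((tmap R N S N' π g (p+1)) ∘ₗ
          (tlin R N S N' (rhoA R S π 𝒜 𝒜' q hbA) (rhoN N N' g 𝒩 𝒩' q hbN) (p+1))
          - LinearMap.id) := by
      refine tgrade_succ_le S N' 𝒜' 𝒩' ?_
      intro n m hnm a ha t ht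
      obtain ⟨ihm, ihe⟩ := ih m (by omega) t ht
      have hmem : rhoA R S π 𝒜 𝒜' q hbA a ∈ 𝒜 n :=
        rho_mem π.toLinearMap 𝒜 𝒜' q hbA (show n ≤ q by omega) ha
      have happ : π (rhoA R S π 𝒜 𝒜' q hbA a) = a :=
        phi_rho π.toLinearMap 𝒜 𝒜' q hbA (show n ≤ q by omega) ha
      refine Submodule.mem_inf.mpr ⟨?_, ?_⟩
      · show tlin R N S N' _ _ (p+1) (a ⊗ₜ[ℚ] t) ∈ tgrade R N 𝒜 𝒩 (p+1) j
        refine mem_of_eq (tlin_tmul R N S N' _ _ p a t) ?_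
        have := tmul_mem_tgrade R N 𝒜 𝒩 hmem ihm
        rwa [hnm] at this
      · rw [LinearMap.mem_ker, LinearMap.sub_apply, LinearMap.comp_apply, sub_eq_zero]
        show tmap R N S N' π g (p+1) (tlin R N S N' _ _ (p+1) (a ⊗ₜ[ℚ] t)) = a ⊗ₜ[ℚ] t
        rw [tlin_tmul, tmap_tmul, happ, ihe]
    obtain ⟨h1, h2⟩ := Submodule.mem_inf.mp (hK hx)
    rw [LinearMap.mem_ker, LinearMap.sub_apply, LinearMap.comp_apply, sub_eq_zero] at h2
    exact ⟨h1, h2⟩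

/-- `blin` preserves the grading and `bmap ∘ blin = id` on `bgrade' p q`. -/
lemma bmap_blin (p : ℕ) : ∀ x ∈ bgrade S M' N' 𝒜' ℳ' 𝒩' p q,
    blin R M N S M' N' (rhoA R S π 𝒜 𝒜' q hbA) (rhoM M M' f ℳ ℳ' q hbM)
      (rhoN N N' g 𝒩 𝒩' q hbN) p x ∈ bgrade R M N 𝒜 ℳ 𝒩 p q
    ∧ bmap R M N S M' N' π f g p
        (blin R M N S M' N' (rhoA R S π 𝒜 𝒜' q hbA) (rhoM M M' f ℳ ℳ' q hbM)
          (rhoN N N' g 𝒩 𝒩' q hbN) p x) = x := by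
  intro x hx
  have hK : bgrade S M' N' 𝒜' ℳ' 𝒩' p q ≤
      (Submodule.comap
        (blin R M N S M' N' (rhoA R S π 𝒜 𝒜' q hbA) (rhoM M M' f ℳ ℳ' q hbM)
          (rhoN N N' g 𝒩 𝒩' q hbN) p)
        (bgrade R M N 𝒜 ℳ 𝒩 p q)) ⊓
      LinearMap.ker ((bmap R M N S M' N' π f g p) ∘ₗ
        (blin R M N S M' N' (rhoA R S π 𝒜 𝒜' q hbA) (rhoM M M' f ℳ ℳ' q hbM)
          (rhoN N N' g 𝒩 𝒩' q hbN) p) - LinearMap.id) := by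
    refine bgrade_le S M' N' 𝒜' ℳ' 𝒩' ?_
    intro n m hnm z hz t ht
    obtain ⟨ihm, ihe⟩ := tmap_tlin R N S N' π g 𝒜 𝒩 𝒜' 𝒩' q hbA hbN p m (by omega) t ht
    have hmem : rhoM M M' f ℳ ℳ' q hbM z ∈ ℳ n :=
      rho_mem f ℳ ℳ' q hbM (show n ≤ q by omega) hz
    have happ : f (rhoM M M' f ℳ ℳ' q hbM z) = z :=
      phi_rho f ℳ ℳ' q hbM (show n ≤ q by omega) hz
    refine Submodule.mem_inf.mpr ⟨?_, ?_⟩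
    · show blin R M N S M' N' _ _ _ p (z ⊗ₜ[ℚ] t) ∈ bgrade R M N 𝒜 ℳ 𝒩 p q
      refine mem_of_eq (blin_tmul R M N S M' N' _ _ _ p z t) ?_
      have := tmul_mem_bgrade R M N 𝒜 ℳ 𝒩 hmem ihm
      rwa [hnm] at this
    · rw [LinearMap.mem_ker, LinearMap.sub_apply, LinearMap.comp_apply, sub_eq_zero]
      show bmap R M N S M' N' π f g p (blin R M N S M' N' _ _ _ p (z ⊗ₜ[ℚ] t)) = z ⊗ₜ[ℚ] t
      rw [blin_tmul, bmap_tmul, happ, ihe]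
  obtain ⟨h1, h2⟩ := Submodule.mem_inf.mp (hK hx)
  rw [LinearMap.mem_ker, LinearMap.sub_apply, LinearMap.comp_apply, sub_eq_zero] at h2
  exact ⟨h1, h2⟩

end BarCore
namespace BarCore

set_option linter.unusedSectionVars false
set_option maxHeartbeats 1000000

open TensorProduct

variable (R : Type) [CommRing R] [Algebra ℚ R]
variable (M : Type) [AddCommGroup M] [Module ℚ M] [Module R M] [IsScalarTower ℚ R M]
variable (N : Type) [AddCommGroup N] [Module ℚ N] [Module R N] [IsScalarTower ℚ R N]
variable (S : Type) [CommRing S] [Algebra ℚ S]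
variable (M' : Type) [AddCommGroup M'] [Module ℚ M'] [Module S M'] [IsScalarTower ℚ S M']
variable (N' : Type) [AddCommGroup N'] [Module ℚ N'] [Module S N'] [IsScalarTower ℚ S N']
variable (π : R →ₐ[ℚ] S) (f : M →ₗ[ℚ] M') (g : N →ₗ[ℚ] N')
variable (𝒜 : ℕ → Submodule ℚ R) (ℳ : ℕ → Submodule ℚ M) (𝒩 : ℕ → Submodule ℚ N)
variable (𝒜' : ℕ → Submodule ℚ S) (ℳ' : ℕ → Submodule ℚ M') (𝒩' : ℕ → Submodule ℚ N')
variable [SetLike.GradedMonoid 𝒜] [SetLike.GradedSMul 𝒜 ℳ] [SetLike.GradedSMul 𝒜 𝒩]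
variable [SetLike.GradedMonoid 𝒜'] [SetLike.GradedSMul 𝒜' ℳ'] [SetLike.GradedSMul 𝒜' 𝒩']
variable [DirectSum.Decomposition 𝒜'] [DirectSum.Decomposition ℳ'] [DirectSum.Decomposition 𝒩']

/-- The key equivalence of graded Tor groups induced by a degreewise isomorphism
in degrees at most `q`. -/
lemma key_equiv
    (hf : ∀ (a : R) (m : M), f (a • m) = (π a) • (f m))
    (hg : ∀ (a : R) (n : N), g (a • n) = (π a) • (g n))
    (hπgr : ∀ n, ∀ a ∈ 𝒜 n, π a ∈ 𝒜' n)
    (hfgr : ∀ n, ∀ m ∈ ℳ n, f m ∈ ℳ' n)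
    (hggr : ∀ n, ∀ x ∈ 𝒩 n, g x ∈ 𝒩' n)
    (q : ℕ)
    (hbA : ∀ n, n ≤ q → Set.BijOn π (𝒜 n : Set R) (𝒜' n : Set S))
    (hbM : ∀ n, n ≤ q → Set.BijOn f (ℳ n : Set M) (ℳ' n : Set M'))
    (hbN : ∀ n, n ≤ q → Set.BijOn g (𝒩 n : Set N) (𝒩' n : Set N'))
    (p : ℕ) :
    Nonempty (gradedTor R M N 𝒜 ℳ 𝒩 p q ≃ₗ[ℚ]
      gradedTor S M' N' 𝒜' ℳ' 𝒩' p q) := by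
  set Φ := bmap R M N S M' N' π f g
  set Ψ := blin R M N S M' N' (rhoA R S π 𝒜 𝒜' q hbA) (rhoM M M' f ℳ ℳ' q hbM)
    (rhoN N N' g 𝒩 𝒩' q hbN) with hΨ
  -- basic facts
  have hΨΦ : ∀ p, ∀ x ∈ bgrade R M N 𝒜 ℳ 𝒩 p q, Ψ p (Φ p x) = x := fun p x hx =>
    blin_bmap R M N S M' N' π f g 𝒜 ℳ 𝒩 𝒜' ℳ' 𝒩' q hbA hbM hbN p x hx
  have hΦΨ : ∀ p, ∀ x ∈ bgrade S M' N' 𝒜' ℳ' 𝒩' p q,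
      Ψ p x ∈ bgrade R M N 𝒜 ℳ 𝒩 p q ∧ Φ p (Ψ p x) = x := fun p x hx =>
    bmap_blin R M N S M' N' π f g 𝒜 ℳ 𝒩 𝒜' ℳ' 𝒩' q hbA hbM hbN p x hx
  have hΦgr : ∀ p, ∀ x ∈ bgrade R M N 𝒜 ℳ 𝒩 p q, Φ p x ∈ bgrade S M' N' 𝒜' ℳ' 𝒩' p q :=
    fun p x hx => bmap_bgrade R M N S M' N' π f g 𝒜 ℳ 𝒩 𝒜' ℳ' 𝒩' hπgr hfgr hggr p q x hx
  have hΦd : ∀ p (x : Bar R M N (p+1)), d S M' N' p (Φ (p+1) x) = Φ p (d R M N p x) :=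
    fun p x => bmap_d R M N S M' N' π f g hf hg p x
  -- cycles are preserved
  have hcycΦ : ∀ x ∈ cycles R M N p ⊓ bgrade R M N 𝒜 ℳ 𝒩 p q,
      Φ p x ∈ cycles S M' N' p ⊓ bgrade S M' N' 𝒜' ℳ' 𝒩' p q := by
    intro x hx
    obtain ⟨hx1, hx2⟩ := Submodule.mem_inf.mp hx
    refine Submodule.mem_inf.mpr ⟨?_, hΦgr p x hx2⟩
    cases p with
    | zero => trivial
    | succ p =>
      have hx1' : d R M N p x = 0 := hx1
      show d S M' N' p (Φ (p+1) x) = 0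
      rw [hΦd p x, hx1', map_zero]
  have hcycΨ : ∀ x ∈ cycles S M' N' p ⊓ bgrade S M' N' 𝒜' ℳ' 𝒩' p q,
      Ψ p x ∈ cycles R M N p ⊓ bgrade R M N 𝒜 ℳ 𝒩 p q := by
    intro x hx
    obtain ⟨hx1, hx2⟩ := Submodule.mem_inf.mp hx
    obtain ⟨hm, he⟩ := hΦΨ p x hx2
    refine Submodule.mem_inf.mpr ⟨?_, hm⟩
    cases p with
    | zero => trivial
    | succ p =>
      have hx1' : d S M' N' p x = 0 := hx1
      show d R M N p (Ψ (p+1) x) = 0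
      have hdm : d R M N p (Ψ (p+1) x) ∈ bgrade R M N 𝒜 ℳ 𝒩 p q :=
        d_bgrade R M N 𝒜 ℳ 𝒩 p q _ hm
      have h0 : Φ p (d R M N p (Ψ (p+1) x)) = 0 := by
        rw [← hΦd p (Ψ (p+1) x), he, hx1']
      have := hΨΦ p _ hdm
      rw [h0, map_zero] at this
      exact this.symm
  -- the restricted map and its inverse
  let C : Submodule ℚ (Bar R M N p) := cycles R M N p ⊓ bgrade R M N 𝒜 ℳ 𝒩 p q
  let C' : Submodule ℚ (Bar S M' N' p) := cycles S M' N' p ⊓ bgrade S M' N' 𝒜' ℳ' 𝒩' p q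
  let e : C →ₗ[ℚ] C' := (Φ p).restrict hcycΦ
  have he_apply : ∀ (x : C), (e x : Bar S M' N' p) = Φ p x := fun x => rfl
  have hinj : Function.Injective e := by
    intro x y hxy
    have h1 : Φ p x.1 = Φ p y.1 := congrArg Subtype.val hxy
    have hx2 := (Submodule.mem_inf.mp x.2).2
    have hy2 := (Submodule.mem_inf.mp y.2).2
    have := hΨΦ p x.1 hx2
    rw [h1, hΨΦ p y.1 hy2] at this
    exact Subtype.ext this.symm
  have hsurj : Function.Surjective e := by
    intro y
    have hy := hcycΨ y.1 y.2
    refine ⟨⟨Ψ p y.1, hy⟩, ?_⟩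
    refine Subtype.ext ?_
    show Φ p (Ψ p y.1) = y.1
    exact (hΦΨ p y.1 (Submodule.mem_inf.mp y.2).2).2
  let eqv : C ≃ₗ[ℚ] C' := LinearEquiv.ofBijective e ⟨hinj, hsurj⟩
  -- boundaries correspond
  have hmap : (Submodule.comap C.subtype (bnd R M N p)).map (eqv : C →ₗ[ℚ] C')
      = Submodule.comap C'.subtype (bnd S M' N' p) := by
    apply le_antisymm
    · rintro y ⟨x, hx, rfl⟩
      obtain ⟨z, hz⟩ := hx
      have hz' : d R M N p z = x.1 := hz
      show Φ p x.1 ∈ bnd S M' N' p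
      rw [← hz', ← hΦd p z]
      exact ⟨Φ (p+1) z, rfl⟩
    · intro y hy
      have hyb : (y : Bar S M' N' p) ∈ bnd S M' N' p := hy
      have hyg : (y : Bar S M' N' p) ∈ bgrade S M' N' 𝒜' ℳ' 𝒩' p q :=
        (Submodule.mem_inf.mp y.2).2
      obtain ⟨z', hz'g, hz'd⟩ := bnd_graded S M' N' 𝒜' ℳ' 𝒩' p q y.1 hyb hyg
      set x : C := eqv.symm y with hxdef
      have hxy : eqv x = y := eqv.apply_symm_apply y
      have hΦx : Φ p x.1 = y.1 := by
        rw [← hxy]; rfl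
      -- x.1 = d (Ψ (p+1) z')
      obtain ⟨hzm, hze⟩ := hΦΨ (p+1) z' hz'g
      have hdzg : d R M N p (Ψ (p+1) z') ∈ bgrade R M N 𝒜 ℳ 𝒩 p q :=
        d_bgrade R M N 𝒜 ℳ 𝒩 p q _ hzm
      have hΦdz : Φ p (d R M N p (Ψ (p+1) z')) = y.1 := by
        rw [← hΦd p (Ψ (p+1) z'), hze, hz'd]
      have hxg : x.1 ∈ bgrade R M N 𝒜 ℳ 𝒩 p q := (Submodule.mem_inf.mp x.2).2
      have hxe : x.1 = d R M N p (Ψ (p+1) z') := by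
        have h1 := hΨΦ p x.1 hxg
        have h2 := hΨΦ p _ hdzg
        rw [hΦx] at h1
        rw [hΦdz] at h2
        rw [← h1, ← h2]
      refine ⟨x, ?_, hxy⟩
      show x.1 ∈ bnd R M N p
      rw [hxe]
      exact ⟨Ψ (p+1) z', rfl⟩
  exact ⟨Submodule.Quotient.equiv _ _ eqv hmap⟩

end BarCore
open BarCore in
/-- Stabilization of graded Tor along an inverse system:
if the graded ring `A*` (here `R`, `𝒜`) is the inverse limit of graded rings `A*_i`
(here `S i`, `𝒜'`), with graded modules `M*`, `N*` inverse limits of the `A*_i`-modules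
`M_i`, `N_i`, and if in each fixed degree `n` the projections are eventually bijections
(the limits stabilize degreewise), then for each internal degree `q` there is `i₀` such
that for all `i ≥ i₀` and all homological degrees `p`,
`Tor_p^{q,A*}(M*,N*) ≅ Tor_p^{q,A*_i}(M_i,N_i)`. -/
theorem gradedTor_stabilizes_along_inverse_limit
    -- the limit graded ring and graded modules
    (R : Type) [CommRing R] [Algebra ℚ R]
    (M : Type) [AddCommGroup M] [Module ℚ M] [Module R M] [IsScalarTower ℚ R M]
    (N : Type) [AddCommGroup N] [Module ℚ N] [Module R N] [IsScalarTower ℚ R N]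
    (𝒜 : ℕ → Submodule ℚ R) [DirectSum.Decomposition 𝒜] [SetLike.GradedMonoid 𝒜]
    (ℳ : ℕ → Submodule ℚ M) [DirectSum.Decomposition ℳ] [SetLike.GradedSMul 𝒜 ℳ]
    (𝒩 : ℕ → Submodule ℚ N) [DirectSum.Decomposition 𝒩] [SetLike.GradedSMul 𝒜 𝒩]
    -- the inverse system of graded rings and graded modules
    (S : ℕ → Type) [∀ i, CommRing (S i)] [∀ i, Algebra ℚ (S i)]
    (M' : ℕ → Type) [∀ i, AddCommGroup (M' i)] [∀ i, Module ℚ (M' i)]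
      [∀ i, Module (S i) (M' i)] [∀ i, IsScalarTower ℚ (S i) (M' i)]
    (N' : ℕ → Type) [∀ i, AddCommGroup (N' i)] [∀ i, Module ℚ (N' i)]
      [∀ i, Module (S i) (N' i)] [∀ i, IsScalarTower ℚ (S i) (N' i)]
    (𝒜' : ∀ i, ℕ → Submodule ℚ (S i)) [∀ i, DirectSum.Decomposition (𝒜' i)]
      [∀ i, SetLike.GradedMonoid (𝒜' i)]
    (ℳ' : ∀ i, ℕ → Submodule ℚ (M' i)) [∀ i, DirectSum.Decomposition (ℳ' i)]
      [∀ i, SetLike.GradedSMul (𝒜' i) (ℳ' i)]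
    (𝒩' : ∀ i, ℕ → Submodule ℚ (N' i)) [∀ i, DirectSum.Decomposition (𝒩' i)]
      [∀ i, SetLike.GradedSMul (𝒜' i) (𝒩' i)]
    -- transition maps of the inverse system of rings
    (t : ∀ i j, i ≤ j → (S j →ₐ[ℚ] S i))
    -- projections from the limit, compatible with the transition maps
    (π : ∀ i, R →ₐ[ℚ] S i)
    (hcompat : ∀ i j (h : i ≤ j), (t i j h).comp (π j) = π i)
    -- projections of the modules, semilinear over the ring projections
    (f : ∀ i, M →ₗ[ℚ] M' i)
    (hf : ∀ i (a : R) (m : M), f i (a • m) = (π i a) • (f i m))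
    (g : ∀ i, N →ₗ[ℚ] N' i)
    (hg : ∀ i (a : R) (n : N), g i (a • n) = (π i a) • (g i n))
    -- the projections are graded
    (hπgr : ∀ i n, Submodule.map (π i).toLinearMap (𝒜 n) ≤ 𝒜' i n)
    (hfgr : ∀ i n, Submodule.map (f i) (ℳ n) ≤ ℳ' i n)
    (hggr : ∀ i n, Submodule.map (g i) (𝒩 n) ≤ 𝒩' i n)
    -- degreewise stabilization of the limits: in each degree the projection is
    -- eventually a bijection onto the corresponding graded piece
    (hA : ∀ n : ℕ, ∃ i₀ : ℕ, ∀ i ≥ i₀, Set.BijOn (π i) (𝒜 n : Set R) (𝒜' i n : Set (S i)))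
    (hM : ∀ n : ℕ, ∃ i₀ : ℕ, ∀ i ≥ i₀, Set.BijOn (f i) (ℳ n : Set M) (ℳ' i n : Set (M' i)))
    (hN : ∀ n : ℕ, ∃ i₀ : ℕ, ∀ i ≥ i₀, Set.BijOn (g i) (𝒩 n : Set N) (𝒩' i n : Set (N' i))) :
    ∀ q : ℕ, ∃ i₀ : ℕ, ∀ i ≥ i₀, ∀ p : ℕ,
      Nonempty (gradedTor R M N 𝒜 ℳ 𝒩 p q ≃ₗ[ℚ]
        gradedTor (S i) (M' i) (N' i) (𝒜' i) (ℳ' i) (𝒩' i) p q) := by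
  classical
  intro q
  choose iA hA' using hA
  choose iM hM' using hM
  choose iN hN' using hN
  refine ⟨(Finset.range (q+1)).sup (fun n => max (iA n) (max (iM n) (iN n))), fun i hi p => ?_⟩
  have hb : ∀ n, n ≤ q → max (iA n) (max (iM n) (iN n)) ≤ i := fun n hn =>
    le_trans (Finset.le_sup (f := fun n => max (iA n) (max (iM n) (iN n)))
      (Finset.mem_range.mpr (by omega))) hi
  refine BarCore.key_equiv R M N (S i) (M' i) (N' i) (π i) (f i) (g i)
    𝒜 ℳ 𝒩 (𝒜' i) (ℳ' i) (𝒩' i)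
    (hf i) (hg i)
    (fun n a ha => hπgr i n ⟨a, ha, rfl⟩)
    (fun n m hm => hfgr i n ⟨m, hm, rfl⟩)
    (fun n x hx => hggr i n ⟨x, hx, rfl⟩)
    q
    (fun n hn => hA' n i (le_trans (le_max_left _ _) (hb n hn)))
    (fun n hn => hM' n i (le_trans (le_trans (le_max_left _ _) (le_max_right _ _)) (hb n hn)))
    (fun n hn => hN' n i (le_trans (le_trans (le_max_right _ _) (le_max_right _ _)) (hb n hn)))
    p
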